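/- ℓ₂ to ℓ∞ bound from storage function: Suppose 𝒳 ≻ 0 is a symmetric matrix, ξ(t+1) evolves with ξ(0) = 0, and for all t: γ·u(t)ᵀu(t) + ξ(t)ᵀ𝒳ξ(t) − ξ(t+1)ᵀ𝒳ξ(t+1) ≥ 0 for some γ > 0. Moreover suppose the block matrix [[𝒳, Cᵀ],[C, γI]] ⪰ 0 for a matrix C. Then the signal e(t) = C ξ(t) satisfies ‖e(t)‖₂² ≤ γ² ∑_{i=0}^{t−1} ‖u(i)‖₂² for all t ≥ 1. -/

import Mathlib

/-! The storage function `V ξ = ξᵀ 𝒳 ξ` starts at `0` and grows by at most `γ ‖u(t)‖²` per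
step, so `V (ξ t) ≤ γ ∑_{i<t} ‖u i‖²`. By the Schur complement of the positive definite block
`γ I`, the block inequality says `CᵀC ⪯ γ 𝒳`, hence `‖C ξ t‖² ≤ γ V (ξ t)`. -/

open Matrix

theorem le_add_sum_range_of_le_add {V w : ℕ → ℝ} (h : ∀ i, V (i + 1) ≤ V i + w i) (t : ℕ) :
    V t ≤ V 0 + ∑ i ∈ Finset.range t, w i := by
  have hsteps : ∑ i ∈ Finset.range t, (V (i + 1) - V i) ≤ ∑ i ∈ Finset.range t, w i :=
    Finset.sum_le_sum fun i _ ↦ sub_le_iff_le_add'.mpr (h i)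
  rw [Finset.sum_range_sub] at hsteps
  linarith

theorem dotProduct_mulVec_le_of_posSemidef_fromBlocks {m n : Type*} [Fintype m] [Fintype n]
    [DecidableEq m] {X : Matrix n n ℝ} {C : Matrix m n ℝ} {γ : ℝ} (hγ : 0 < γ)
    (h : (fromBlocks X Cᵀ C (γ • 1)).PosSemidef) (x : n → ℝ) :
    (C *ᵥ x) ⬝ᵥ (C *ᵥ x) ≤ γ * (x ⬝ᵥ (X *ᵥ x)) := by
  have hD : (γ • 1 : Matrix m m ℝ).PosDef := PosDef.one.smul hγ
  let _ := hD.isUnit.invertible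
  have hinv : (γ • 1 : Matrix m m ℝ)⁻¹ = γ⁻¹ • 1 :=
    inv_eq_left_inv (by simp [smul_smul, hγ.ne'])
  have hschur := ((PosDef.fromBlocks₂₂ X Cᵀ hD).mp (by simpa using h)).dotProduct_mulVec_nonneg x
  simp only [hinv, conjTranspose_eq_transpose_of_trivial, star_trivial, sub_mulVec,
    dotProduct_sub, Matrix.mul_smul, Matrix.mul_one, smul_mulVec, ← mulVec_mulVec,
    dotProduct_smul, dotProduct_mulVec x Cᵀ, vecMul_transpose, smul_eq_mul, sub_nonneg] at hschur
  rwa [inv_mul_le_iff₀ hγ] at hschur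

theorem l2_to_linf_from_storage_general {n nu p : ℕ}
    (𝒳 : Matrix (Fin n) (Fin n) ℝ)
    (C : Matrix (Fin p) (Fin n) ℝ) (γ : ℝ) (hγ : 0 < γ)
    (ξ : ℕ → Fin n → ℝ) (u : ℕ → Fin nu → ℝ)
    (h0 : ξ 0 = 0)
    (h1 : ∀ t : ℕ,
      0 ≤ γ * (u t ⬝ᵥ u t) + ξ t ⬝ᵥ (𝒳 *ᵥ ξ t) - ξ (t + 1) ⬝ᵥ (𝒳 *ᵥ ξ (t + 1)))
    (h2 : (Matrix.fromBlocks 𝒳 Cᵀ C (γ • (1 : Matrix (Fin p) (Fin p) ℝ))).PosSemidef) :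
    ∀ t : ℕ, 1 ≤ t →
      (C *ᵥ ξ t) ⬝ᵥ (C *ᵥ ξ t) ≤ γ ^ 2 * ∑ i ∈ Finset.range t, u i ⬝ᵥ u i := by
  intro t _
  have hstorage : ξ t ⬝ᵥ (𝒳 *ᵥ ξ t) ≤ γ * ∑ i ∈ Finset.range t, u i ⬝ᵥ u i := by
    have := le_add_sum_range_of_le_add (V := fun t ↦ ξ t ⬝ᵥ (𝒳 *ᵥ ξ t))
      (w := fun i ↦ γ * (u i ⬝ᵥ u i)) (fun i ↦ by linarith [h1 i]) t
    simpa [h0, Finset.mul_sum] using this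
  calc (C *ᵥ ξ t) ⬝ᵥ (C *ᵥ ξ t) ≤ γ * (ξ t ⬝ᵥ (𝒳 *ᵥ ξ t)) :=
        dotProduct_mulVec_le_of_posSemidef_fromBlocks hγ h2 (ξ t)
    _ ≤ γ * (γ * ∑ i ∈ Finset.range t, u i ⬝ᵥ u i) := mul_le_mul_of_nonneg_left hstorage hγ.le
    _ = γ ^ 2 * ∑ i ∈ Finset.range t, u i ⬝ᵥ u i := by ring

theorem l2_to_linf_from_storage {n nu p : ℕ}
    (𝒳 : Matrix (Fin n) (Fin n) ℝ) (h𝒳 : 𝒳.PosDef)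
    (C : Matrix (Fin p) (Fin n) ℝ) (γ : ℝ) (hγ : 0 < γ)
    (ξ : ℕ → Fin n → ℝ) (u : ℕ → Fin nu → ℝ)
    (h0 : ξ 0 = 0)
    (h1 : ∀ t : ℕ,
      0 ≤ γ * (u t ⬝ᵥ u t) + ξ t ⬝ᵥ (𝒳 *ᵥ ξ t) - ξ (t + 1) ⬝ᵥ (𝒳 *ᵥ ξ (t + 1)))
    (h2 : (Matrix.fromBlocks 𝒳 Cᵀ C (γ • (1 : Matrix (Fin p) (Fin p) ℝ))).PosSemidef) :
    ∀ t : ℕ, 1 ≤ t →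
      (C *ᵥ ξ t) ⬝ᵥ (C *ᵥ ξ t) ≤ γ ^ 2 * ∑ i ∈ Finset.range t, u i ⬝ᵥ u i :=
  l2_to_linf_from_storage_general 𝒳 C γ hγ ξ u h0 h1 h2
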